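/- arXiv:1809.03070 — 2 statements merged into one kernel-verified Lean document; each statement's English description precedes it below -/
import Mathlib

section
/- (Sweep theorem, closed-loop case.) Suppose s₁, s₂, s₃, s₄ : [0,1] → ℝ are continuously differentiable and trace rectangles gracing γ on [0,1], and suppose s_j(1) = s_j(0) for j = 1, 2, 3, 4 (the path of rectangles is a closed loop). Then ∫₀¹ (Y(t) X′(t) − X(t) Y′(t)) dt = 0; that is, the shape loop t ↦ (X(t), Y(t)) bounds signed area 0. -/
/-!
Write `u = p₂ − p₁`, `v = p₄ − p₁` for the sides at the corner `p₁`, so `X = ‖u‖` and, by the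
parallelogram relation, `Y = ‖v‖`. Since `u ⊥ v` and `det(u, v) = XY > 0`, a direct computation
gives `Y X′ − X Y′ = det(u′, v) − det(u, v′)`, and bilinearity of `det` together with
`p₃ = p₂ + p₄ − p₁` rewrites this as `det(p₂, p₂′) + det(p₄, p₄′) − det(p₁, p₁′) − det(p₃, p₃′)`.
Each `det(pⱼ, pⱼ′) = sⱼ′ · g(sⱼ)` with `g = det(γ, γ′)` continuous, so its integral is
`∫ g` from `sⱼ(0)` to `sⱼ(1) = sⱼ(0)`, which is zero.
-/

noncomputable section

open Set Filter Topology RealInnerProductSpace intervalIntegral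

/-- The planar cross product `det(u,v) = u₁v₂ − u₂v₁`. -/
def pdet (u v : EuclideanSpace ℝ (Fin 2)) : ℝ := u 0 * v 1 - u 1 * v 0

theorem HasDerivAt.norm {F : Type*} [NormedAddCommGroup F] [InnerProductSpace ℝ F]
    {f : ℝ → F} {f' : F} {x : ℝ} (hf : HasDerivAt f f' x) (h0 : f x ≠ 0) :
    HasDerivAt (fun y => ‖f y‖) (⟪f x, f'⟫ / ‖f x‖) x := by
  have hpos : 0 < ‖f x‖ := norm_pos_iff.2 h0
  have h := hf.norm_sq.sqrt (pow_pos hpos 2).ne'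
  simp only [Real.sqrt_sq (norm_nonneg _)] at h
  convert h using 1
  field_simp

section PlaneGeometry

variable {u v a b : EuclideanSpace ℝ (Fin 2)}

theorem inner_eq_fin_two : ⟪u, v⟫ = u 0 * v 0 + u 1 * v 1 := by
  simp [PiLp.inner_apply, Fin.sum_univ_two, mul_comm]

theorem norm_sq_eq_fin_two : ‖u‖ ^ 2 = u 0 ^ 2 + u 1 ^ 2 := by
  simp [EuclideanSpace.norm_sq_eq, Fin.sum_univ_two]

theorem pdet_smul_right (c : ℝ) : pdet u (c • v) = c * pdet u v := by
  simp only [pdet, PiLp.smul_apply, smul_eq_mul]; ring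

theorem Continuous.pdet {α : Type*} [TopologicalSpace α] {f g : α → EuclideanSpace ℝ (Fin 2)}
    (hf : Continuous f) (hg : Continuous g) : Continuous fun x => _root_.pdet (f x) (g x) := by
  unfold _root_.pdet
  fun_prop

theorem pdet_sq_add_inner_sq : pdet u v ^ 2 + ⟪u, v⟫ ^ 2 = ‖u‖ ^ 2 * ‖v‖ ^ 2 := by
  rw [inner_eq_fin_two, norm_sq_eq_fin_two, norm_sq_eq_fin_two, pdet]
  ring

theorem ne_zero_left_of_pdet_ne_zero (h : pdet u v ≠ 0) : u ≠ 0 := by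
  rintro rfl; simp [pdet] at h

theorem ne_zero_right_of_pdet_ne_zero (h : pdet u v ≠ 0) : v ≠ 0 := by
  rintro rfl; simp [pdet] at h

theorem norm_mul_norm_eq_pdet (huv : ⟪u, v⟫ = 0) (hpos : 0 < pdet u v) :
    ‖u‖ * ‖v‖ = pdet u v := by
  have h := pdet_sq_add_inner_sq (u := u) (v := v)
  rw [huv] at h
  nlinarith [mul_nonneg (norm_nonneg u) (norm_nonneg v)]

theorem norm_sq_mul_inner_sub_norm_sq_mul_inner (huv : ⟪u, v⟫ = 0) :
    ‖v‖ ^ 2 * ⟪u, a⟫ - ‖u‖ ^ 2 * ⟪v, b⟫ = pdet u v * (pdet a v - pdet u b) := by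
  rw [inner_eq_fin_two] at huv
  simp only [inner_eq_fin_two, norm_sq_eq_fin_two, pdet]
  linear_combination (v 0 * a 0 + v 1 * a 1 - u 0 * b 0 - u 1 * b 1) * huv

theorem norm_mul_deriv_norm_sub (huv : ⟪u, v⟫ = 0) (hpos : 0 < pdet u v) :
    ‖v‖ * (⟪u, a⟫ / ‖u‖) - ‖u‖ * (⟪v, b⟫ / ‖v‖) = pdet a v - pdet u b := by
  have hu : ‖u‖ ≠ 0 := norm_ne_zero_iff.2 (ne_zero_left_of_pdet_ne_zero hpos.ne')
  have hv : ‖v‖ ≠ 0 := norm_ne_zero_iff.2 (ne_zero_right_of_pdet_ne_zero hpos.ne')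
  have h := norm_sq_mul_inner_sub_norm_sq_mul_inner (a := a) (b := b) huv
  rw [← norm_mul_norm_eq_pdet huv hpos] at h
  field_simp
  linear_combination h

end PlaneGeometry

section Rectangle

variable {p₁ p₂ p₃ p₄ : ℝ → EuclideanSpace ℝ (Fin 2)} {q₁ q₂ q₃ q₄ : EuclideanSpace ℝ (Fin 2)}
  {t : ℝ}

theorem norm_mul_deriv_norm_sub_eq_pdet_sum (h₁ : HasDerivAt p₁ q₁ t) (h₂ : HasDerivAt p₂ q₂ t)
    (h₃ : HasDerivAt p₃ q₃ t) (h₄ : HasDerivAt p₄ q₄ t)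
    (hpar : ∀ᶠ τ in 𝓝 t, p₁ τ + p₃ τ = p₂ τ + p₄ τ)
    (hperp : ⟪p₂ t - p₁ t, p₄ t - p₁ t⟫ = 0) (hccw : 0 < pdet (p₂ t - p₁ t) (p₄ t - p₁ t)) :
    ‖p₃ t - p₂ t‖ * deriv (fun τ => ‖p₂ τ - p₁ τ‖) t
        - ‖p₂ t - p₁ t‖ * deriv (fun τ => ‖p₃ τ - p₂ τ‖) t
      = pdet (p₂ t) q₂ + pdet (p₄ t) q₄ - pdet (p₁ t) q₁ - pdet (p₃ t) q₃ := by
  have hside : (fun τ => p₃ τ - p₂ τ) =ᶠ[𝓝 t] fun τ => p₄ τ - p₁ τ := by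
    filter_upwards [hpar] with τ hτ
    rw [sub_eq_sub_iff_add_eq_add, add_comm, hτ, add_comm]
  have hp₃ : p₃ t = p₂ t + p₄ t - p₁ t := by
    rw [eq_sub_iff_add_eq, add_comm, hpar.self_of_nhds]
  have hq₃ : q₃ = q₂ + q₄ - q₁ := by
    have h := (h₃.sub h₂).congr_of_eventuallyEq hside.symm
    rw [sub_eq_iff_eq_add.1 ((h₄.sub h₁).unique h).symm]
    abel
  have hX := (h₂.fun_sub h₁).norm (ne_zero_left_of_pdet_ne_zero hccw.ne')
  have hY : HasDerivAt (fun τ => ‖p₃ τ - p₂ τ‖) _ t :=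
    ((h₄.fun_sub h₁).norm (ne_zero_right_of_pdet_ne_zero hccw.ne')).congr_of_eventuallyEq
      (hside.fun_comp norm)
  rw [hX.deriv, hY.deriv, show p₃ t - p₂ t = p₄ t - p₁ t from hside.self_of_nhds,
    norm_mul_deriv_norm_sub hperp hccw, hp₃, hq₃]
  simp only [pdet, PiLp.sub_apply, PiLp.add_apply]
  ring

end Rectangle

section IntervalCalculus

variable {a b t : ℝ} {s g : ℝ → ℝ}

theorem ContDiffOn.hasDerivAt_derivWithin_Icc (hs : ContDiffOn ℝ 1 s (Icc a b))
    (ht : t ∈ Ioo a b) : HasDerivAt s (derivWithin s (Icc a b) t) t := by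
  have hmem : Icc a b ∈ 𝓝 t := Icc_mem_nhds ht.1 ht.2
  rw [derivWithin_of_mem_nhds hmem]
  exact (((hs.differentiableOn one_ne_zero) t (Ioo_subset_Icc_self ht)).differentiableAt
    hmem).hasDerivAt

theorem ContDiffOn.intervalIntegrable_derivWithin_mul_comp (hab : a < b)
    (hs : ContDiffOn ℝ 1 s (Icc a b)) (hg : Continuous g) :
    IntervalIntegrable (fun t => derivWithin s (Icc a b) t * g (s t)) MeasureTheory.volume a b :=
  (((hs.continuousOn_derivWithin (uniqueDiffOn_Icc hab) le_rfl).mul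
    (hg.comp_continuousOn hs.continuousOn)).mono (uIcc_of_le hab.le).subset).intervalIntegrable

theorem ContDiffOn.integral_derivWithin_mul_comp_eq_zero (hab : a < b)
    (hs : ContDiffOn ℝ 1 s (Icc a b)) (hloop : s b = s a) (hg : Continuous g) :
    ∫ t in a..b, derivWithin s (Icc a b) t * g (s t) = 0 := by
  have hI : uIcc a b = Icc a b := uIcc_of_le hab.le
  have hderiv : ∀ t ∈ Ioo (min a b) (max a b),
      HasDerivWithinAt s (derivWithin s (Icc a b) t) (Ioi t) t := by
    rw [min_eq_left hab.le, max_eq_right hab.le]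
    exact fun t ht => (hs.hasDerivAt_derivWithin_Icc ht).hasDerivWithinAt
  have h := intervalIntegral.integral_comp_mul_deriv'' (hI ▸ hs.continuousOn) hderiv
    (hI ▸ hs.continuousOn_derivWithin (uniqueDiffOn_Icc hab) le_rfl) hg.continuousOn
  simp only [Function.comp_def, mul_comm (g _)] at h
  rw [h, hloop, intervalIntegral.integral_same]

end IntervalCalculus

theorem stmt6_general
    (γ : ℝ → EuclideanSpace ℝ (Fin 2)) (hγ : ContDiff ℝ 1 γ)
    (s₁ s₂ s₃ s₄ : ℝ → ℝ)
    (hc₁ : ContDiffOn ℝ 1 s₁ (Set.Icc (0:ℝ) 1)) (hc₂ : ContDiffOn ℝ 1 s₂ (Set.Icc (0:ℝ) 1))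
    (hc₃ : ContDiffOn ℝ 1 s₃ (Set.Icc (0:ℝ) 1)) (hc₄ : ContDiffOn ℝ 1 s₄ (Set.Icc (0:ℝ) 1))
    (hpar : ∀ t ∈ Set.Icc (0:ℝ) 1, γ (s₁ t) + γ (s₃ t) = γ (s₂ t) + γ (s₄ t))
    (hperp : ∀ t ∈ Set.Icc (0:ℝ) 1, inner ℝ (γ (s₂ t) - γ (s₁ t)) (γ (s₄ t) - γ (s₁ t)) = (0 : ℝ))
    (hccw : ∀ t ∈ Set.Icc (0:ℝ) 1, pdet (γ (s₂ t) - γ (s₁ t)) (γ (s₄ t) - γ (s₁ t)) > 0)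
    (X Y : ℝ → ℝ)
    (hX : X = fun t => ‖γ (s₂ t) - γ (s₁ t)‖)
    (hY : Y = fun t => ‖γ (s₃ t) - γ (s₂ t)‖)
    (hloop₁ : s₁ 1 = s₁ 0) (hloop₂ : s₂ 1 = s₂ 0)
    (hloop₃ : s₃ 1 = s₃ 0) (hloop₄ : s₄ 1 = s₄ 0) :
    ∫ t in (0:ℝ)..1, (Y t * deriv X t - X t * deriv Y t) = 0 := by
  subst hX hY
  set g : ℝ → ℝ := fun s => pdet (γ s) (deriv γ s)
  have hg : Continuous g := hγ.continuous.pdet (hγ.continuous_deriv le_rfl)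
  set F : (ℝ → ℝ) → ℝ → ℝ := fun s t => derivWithin s (Icc 0 1) t * g (s t)
  have hint : ∀ s, ContDiffOn ℝ 1 s (Icc 0 1) → IntervalIntegrable (F s) MeasureTheory.volume 0 1 :=
    fun s hs => hs.intervalIntegrable_derivWithin_mul_comp one_pos hg
  have hvertex : ∀ s, ContDiffOn ℝ 1 s (Icc 0 1) → ∀ t ∈ Ioo (0:ℝ) 1,
      HasDerivAt (fun τ => γ (s τ)) (derivWithin s (Icc 0 1) t • deriv γ (s t)) t :=
    fun s hs t ht => (hγ.differentiable one_ne_zero (s t)).hasDerivAt.scomp t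
      (hs.hasDerivAt_derivWithin_Icc ht)
  rw [integral_congr_Ioo_of_le zero_le_one (g := fun t => F s₂ t + F s₄ t - F s₁ t - F s₃ t),
    integral_sub (((hint _ hc₂).add (hint _ hc₄)).sub (hint _ hc₁)) (hint _ hc₃),
    integral_sub ((hint _ hc₂).add (hint _ hc₄)) (hint _ hc₁),
    integral_add (hint _ hc₂) (hint _ hc₄),
    hc₁.integral_derivWithin_mul_comp_eq_zero one_pos hloop₁ hg,
    hc₂.integral_derivWithin_mul_comp_eq_zero one_pos hloop₂ hg,
    hc₃.integral_derivWithin_mul_comp_eq_zero one_pos hloop₃ hg,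
    hc₄.integral_derivWithin_mul_comp_eq_zero one_pos hloop₄ hg]
  · norm_num
  intro t ht
  have ht' : t ∈ Icc (0:ℝ) 1 := Ioo_subset_Icc_self ht
  simp only [F, g, ← pdet_smul_right]
  exact norm_mul_deriv_norm_sub_eq_pdet_sum (p₁ := fun τ => γ (s₁ τ)) (p₂ := fun τ => γ (s₂ τ))
    (p₃ := fun τ => γ (s₃ τ)) (p₄ := fun τ => γ (s₄ τ))
    (hvertex s₁ hc₁ t ht) (hvertex s₂ hc₂ t ht) (hvertex s₃ hc₃ t ht) (hvertex s₄ hc₄ t ht)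
    (Filter.mem_of_superset (Icc_mem_nhds ht.1 ht.2) hpar) (hperp t ht') (hccw t ht')

/-- Sweep theorem, closed-loop case: for a continuously differentiable closed
loop of rectangles gracing `γ`, the shape loop `t ↦ (X t, Y t)` bounds signed
area `0`, i.e. `∫₀¹ (Y X′ − X Y′) = 0`. -/
theorem stmt6
    (γ : ℝ → EuclideanSpace ℝ (Fin 2)) (hγ : ContDiff ℝ 1 γ)
    (hper : ∀ s : ℝ, γ (s + 1) = γ s)
    (s₁ s₂ s₃ s₄ : ℝ → ℝ)
    (hc₁ : ContDiffOn ℝ 1 s₁ (Set.Icc (0:ℝ) 1)) (hc₂ : ContDiffOn ℝ 1 s₂ (Set.Icc (0:ℝ) 1))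
    (hc₃ : ContDiffOn ℝ 1 s₃ (Set.Icc (0:ℝ) 1)) (hc₄ : ContDiffOn ℝ 1 s₄ (Set.Icc (0:ℝ) 1))
    (hpar : ∀ t ∈ Set.Icc (0:ℝ) 1, γ (s₁ t) + γ (s₃ t) = γ (s₂ t) + γ (s₄ t))
    (hperp : ∀ t ∈ Set.Icc (0:ℝ) 1, inner ℝ (γ (s₂ t) - γ (s₁ t)) (γ (s₄ t) - γ (s₁ t)) = (0 : ℝ))
    (hccw : ∀ t ∈ Set.Icc (0:ℝ) 1, pdet (γ (s₂ t) - γ (s₁ t)) (γ (s₄ t) - γ (s₁ t)) > 0)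
    (X Y : ℝ → ℝ)
    (hX : X = fun t => ‖γ (s₂ t) - γ (s₁ t)‖)
    (hY : Y = fun t => ‖γ (s₃ t) - γ (s₂ t)‖)
    (hloop₁ : s₁ 1 = s₁ 0) (hloop₂ : s₂ 1 = s₂ 0)
    (hloop₃ : s₃ 1 = s₃ 0) (hloop₄ : s₄ 1 = s₄ 0) :
    ∫ t in (0:ℝ)..1, (Y t * deriv X t - X t * deriv Y t) = 0 :=
  stmt6_general γ hγ s₁ s₂ s₃ s₄ hc₁ hc₂ hc₃ hc₄ hpar hperp hccw X Y hX hY hloop₁ hloop₂ hloop₃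
    hloop₄
end
end

section
/- (Non-squeezing.) Suppose s₁, s₂, s₃, s₄ : [0,1] → ℝ are continuously differentiable and trace rectangles gracing γ on [0,1]; suppose there is a constant r > 0 with Y(t) = r·X(t) for all t ∈ [0,1] (constant aspect ratio); and suppose A₂(0) + A₄(0) = 0 and A₂(1) + A₄(1) = 0 (at the two ends, the second and fourth sides of the rectangle cut off regions of total signed area zero, as happens when these sides lie along straight portions of γ). Then X(1) = X(0) and Y(1) = Y(0); that is, the initial and final rectangles are congruent. -/
/-!
The quantity `A₂ + A₄ + (r/2) X²` is conserved along the motion. The area cut off by the chord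
from `γ σ` to `γ τ` changes at the rate `½ det(γ τ - γ σ, σ' γ'(σ) + τ' γ'(τ))`. Since the sides
`p₃ - p₂` and `p₄ - p₁` coincide and equal `r` times the quarter turn of `p₂ - p₁`, and
`p₃' = p₂' + p₄' - p₁'`, the two rates add up to
`det(p₄ - p₁, (p₂ - p₁)') = -r ⟪p₂ - p₁, (p₂ - p₁)'⟫ = -(r/2) (X²)'`.
As `A₂ + A₄` vanishes at both ends, `X 1 ^ 2 = X 0 ^ 2`, and `Y = r X` follows.
-/

noncomputable section

open Set
open scoped RealInnerProductSpace

local notation "ℝ²" => EuclideanSpace ℝ (Fin 2)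

lemma Function.Periodic.deriv {𝕜 F : Type*} [NontriviallyNormedField 𝕜] [NormedAddCommGroup F]
    [NormedSpace 𝕜 F] {f : 𝕜 → F} {c : 𝕜} (h : Function.Periodic f c) :
    Function.Periodic (deriv f) c := fun x => by
  rw [← deriv_comp_add_const, h.funext]

lemma HasDerivWithinAt.euclidean_apply {ι : Type*} [Fintype ι] {f : ℝ → EuclideanSpace ℝ ι}
    {f' : EuclideanSpace ℝ ι} {s : Set ℝ} {x : ℝ} (hf : HasDerivWithinAt f f' s x) (i : ι) :
    HasDerivWithinAt (fun t => f t i) (f' i) s x :=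
  (EuclideanSpace.proj i : EuclideanSpace ℝ ι →L[ℝ] ℝ).hasFDerivAt.comp_hasDerivWithinAt x hf

lemma HasDerivWithinAt.pdet {f g : ℝ → ℝ²} {f' g' : ℝ²} {s : Set ℝ} {x : ℝ}
    (hf : HasDerivWithinAt f f' s x) (hg : HasDerivWithinAt g g' s x) :
    HasDerivWithinAt (fun t => pdet (f t) (g t)) (pdet f' (g x) + pdet (f x) g') s x := by
  refine (((hf.euclidean_apply 0).fun_mul (hg.euclidean_apply 1)).fun_sub
    ((hf.euclidean_apply 1).fun_mul (hg.euclidean_apply 0))).congr_deriv ?_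
  simp only [_root_.pdet]
  ring

lemma EuclideanSpace.real_inner_fin_two (u v : ℝ²) : ⟪u, v⟫ = u 0 * v 0 + u 1 * v 1 := by
  simp [PiLp.inner_apply, Fin.sum_univ_two, mul_comm]

lemma EuclideanSpace.norm_sq_fin_two (u : ℝ²) : ‖u‖ ^ 2 = u 0 ^ 2 + u 1 ^ 2 := by
  simp [EuclideanSpace.norm_sq_eq, Fin.sum_univ_two]

lemma pdet_eq_neg_mul_inner_of_inner_eq_zero {u v : ℝ²} {r : ℝ} (huv : ⟪u, v⟫ = 0)
    (hdet : 0 < pdet u v) (hnorm : ‖v‖ = r * ‖u‖) (w : ℝ²) : pdet v w = -(r * ⟪u, w⟫) := by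
  rw [EuclideanSpace.real_inner_fin_two] at huv ⊢
  have hsq : v 0 ^ 2 + v 1 ^ 2 = r ^ 2 * (u 0 ^ 2 + u 1 ^ 2) := by
    rw [← EuclideanSpace.norm_sq_fin_two, ← EuclideanSpace.norm_sq_fin_two, hnorm, mul_pow]
  have hr : 0 ≤ r * (u 0 ^ 2 + u 1 ^ 2) := by
    rw [← EuclideanSpace.norm_sq_fin_two, sq, ← mul_assoc, ← hnorm]
    positivity
  have hdet' : pdet u v = r * (u 0 ^ 2 + u 1 ^ 2) := by
    -- Lagrange's identity `det(u, v)² + ⟪u, v⟫² = ‖u‖² ‖v‖²`.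
    have hlagrange : pdet u v ^ 2 = (r * (u 0 ^ 2 + u 1 ^ 2)) ^ 2 := by
      unfold pdet
      linear_combination (u 0 ^ 2 + u 1 ^ 2) * hsq - (u 0 * v 0 + u 1 * v 1) * huv
    exact (sq_eq_sq₀ hdet.le hr).1 hlagrange
  -- `v` is `r • u` turned a quarter-turn counterclockwise.
  have hrot : (v 0 + r * u 1) ^ 2 + (v 1 - r * u 0) ^ 2 = 0 := by
    unfold pdet at hdet'
    linear_combination hsq - 2 * r * hdet'
  have hv0 : v 0 = -(r * u 1) := by
    nlinarith [sq_nonneg (v 0 + r * u 1), sq_nonneg (v 1 - r * u 0)]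
  have hv1 : v 1 = r * u 0 := by
    nlinarith [sq_nonneg (v 0 + r * u 1), sq_nonneg (v 1 - r * u 0)]
  rw [pdet, hv0, hv1]
  ring

/-- In the notation of the statement, `A_j t = arcArea γ (s_j t) (s_{j+1} t)`. -/
def arcArea (γ : ℝ → ℝ²) (σ τ : ℝ) : ℝ :=
  (1/2) * (∫ s in σ..τ, pdet (γ s) (deriv γ s)) + (1/2) * pdet (γ τ) (γ σ)

lemma hasDerivWithinAt_arcArea {γ : ℝ → ℝ²} (hγ : ContDiff ℝ 1 γ) {σ τ : ℝ → ℝ} {σ' τ' : ℝ}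
    {s : Set ℝ} {t : ℝ} (hσ : HasDerivWithinAt σ σ' s t) (hτ : HasDerivWithinAt τ τ' s t) :
    HasDerivWithinAt (fun x => arcArea γ (σ x) (τ x))
      ((1/2) * pdet (γ (τ t) - γ (σ t)) (σ' • deriv γ (σ t) + τ' • deriv γ (τ t))) s t := by
  have hγ' (x : ℝ) : HasDerivAt γ (deriv γ x) x :=
    (hγ.differentiable one_ne_zero x).hasDerivAt
  have hf : Continuous fun x => pdet (γ x) (deriv γ x) := by
    have := hγ.continuous
    have := hγ.continuous_deriv le_rfl
    unfold pdet
    fun_prop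
  set F := fun u => ∫ x in (0:ℝ)..u, pdet (γ x) (deriv γ x)
  have hF (u : ℝ) : HasDerivAt F (pdet (γ u) (deriv γ u)) u :=
    (hf.integral_hasStrictDerivAt 0 u).hasDerivAt
  have hint (a b : ℝ) : ∫ x in a..b, pdet (γ x) (deriv γ x) = F b - F a :=
    (intervalIntegral.integral_interval_sub_left (hf.intervalIntegrable _ _)
      (hf.intervalIntegrable _ _)).symm
  have h := ((((hF (τ t)).scomp_hasDerivWithinAt t hτ).sub
    ((hF (σ t)).scomp_hasDerivWithinAt t hσ)).const_mul (1/2)).add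
    ((((hγ' (τ t)).scomp_hasDerivWithinAt t hτ).pdet
      ((hγ' (σ t)).scomp_hasDerivWithinAt t hσ)).const_mul (1/2))
  simp only [arcArea, hint]
  refine h.congr_deriv ?_
  simp only [pdet, PiLp.add_apply, PiLp.sub_apply, PiLp.smul_apply, smul_eq_mul, Function.comp]
  ring

def rectangleInvariant (γ : ℝ → ℝ²) (s₁ s₂ s₃ s₄ : ℝ → ℝ) (r t : ℝ) : ℝ :=
  arcArea γ (s₂ t) (s₃ t) + arcArea γ (s₄ t) (s₁ t + 1) + r / 2 * ‖γ (s₂ t) - γ (s₁ t)‖ ^ 2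

lemma hasDerivWithinAt_rectangleInvariant {γ : ℝ → ℝ²} (hγ : ContDiff ℝ 1 γ)
    (hper : Function.Periodic γ 1) {s₁ s₂ s₃ s₄ : ℝ → ℝ} {a₁ a₂ a₃ a₄ r t : ℝ} {S : Set ℝ}
    (hS : UniqueDiffWithinAt ℝ S t) (ht : t ∈ S)
    (h₁ : HasDerivWithinAt s₁ a₁ S t) (h₂ : HasDerivWithinAt s₂ a₂ S t)
    (h₃ : HasDerivWithinAt s₃ a₃ S t) (h₄ : HasDerivWithinAt s₄ a₄ S t)
    (hpar : ∀ x ∈ S, γ (s₁ x) + γ (s₃ x) = γ (s₂ x) + γ (s₄ x))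
    (hquarter : ∀ w, pdet (γ (s₄ t) - γ (s₁ t)) w = -(r * ⟪γ (s₂ t) - γ (s₁ t), w⟫)) :
    HasDerivWithinAt (rectangleInvariant γ s₁ s₂ s₃ s₄ r) 0 S t := by
  have hp {σ : ℝ → ℝ} {a : ℝ} (h : HasDerivWithinAt σ a S t) :
      HasDerivWithinAt (fun x => γ (σ x)) (a • deriv γ (σ t)) S t :=
    (hγ.differentiable one_ne_zero (σ t)).hasDerivAt.scomp_hasDerivWithinAt t h
  have hp₃ (x : ℝ) (hx : x ∈ S) : γ (s₃ x) = γ (s₂ x) + γ (s₄ x) - γ (s₁ x) :=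
    eq_sub_of_add_eq' (hpar x hx)
  have hv₃ :
      a₃ • deriv γ (s₃ t) = a₂ • deriv γ (s₂ t) + a₄ • deriv γ (s₄ t) - a₁ • deriv γ (s₁ t) :=
    hS.eq_deriv _ (hp h₃) (((hp h₂).add (hp h₄)).sub (hp h₁) |>.congr hp₃ (hp₃ t ht))
  have h := ((hasDerivWithinAt_arcArea hγ h₂ h₃).add
    (hasDerivWithinAt_arcArea hγ h₄ (h₁.add_const 1))).add
    ((((hp h₂).fun_sub (hp h₁)).norm_sq).const_mul (r / 2))
  refine h.congr_deriv ?_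
  have hrate := hquarter (a₂ • deriv γ (s₂ t) - a₁ • deriv γ (s₁ t))
  rw [hper, hper.deriv, hv₃, hp₃ t ht]
  rw [EuclideanSpace.real_inner_fin_two] at hrate ⊢
  simp only [pdet, PiLp.add_apply, PiLp.sub_apply, PiLp.smul_apply, smul_eq_mul] at hrate ⊢
  linear_combination hrate

theorem stmt11_general
    (γ : ℝ → EuclideanSpace ℝ (Fin 2)) (hγ : ContDiff ℝ 1 γ)
    (hper : ∀ s : ℝ, γ (s + 1) = γ s)
    (s₁ s₂ s₃ s₄ : ℝ → ℝ)
    (hc₁ : ContDiffOn ℝ 1 s₁ (Set.Icc (0:ℝ) 1)) (hc₂ : ContDiffOn ℝ 1 s₂ (Set.Icc (0:ℝ) 1))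
    (hc₃ : ContDiffOn ℝ 1 s₃ (Set.Icc (0:ℝ) 1)) (hc₄ : ContDiffOn ℝ 1 s₄ (Set.Icc (0:ℝ) 1))
    (hpar : ∀ t ∈ Set.Icc (0:ℝ) 1, γ (s₁ t) + γ (s₃ t) = γ (s₂ t) + γ (s₄ t))
    (hperp : ∀ t ∈ Set.Icc (0:ℝ) 1, inner ℝ (γ (s₂ t) - γ (s₁ t)) (γ (s₄ t) - γ (s₁ t)) = (0 : ℝ))
    (hccw : ∀ t ∈ Set.Icc (0:ℝ) 1, pdet (γ (s₂ t) - γ (s₁ t)) (γ (s₄ t) - γ (s₁ t)) > 0)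
    (X Y : ℝ → ℝ)
    (hX : X = fun t => ‖γ (s₂ t) - γ (s₁ t)‖)
    (hY : Y = fun t => ‖γ (s₃ t) - γ (s₂ t)‖)
    (A₂ A₄ : ℝ → ℝ)
    (hA₂ : A₂ = fun t => (1/2) * (∫ s in (s₂ t)..(s₃ t), pdet (γ s) (deriv γ s))
        + (1/2) * pdet (γ (s₃ t)) (γ (s₂ t)))
    (hA₄ : A₄ = fun t => (1/2) * (∫ s in (s₄ t)..(s₁ t + 1), pdet (γ s) (deriv γ s))
        + (1/2) * pdet (γ (s₁ t + 1)) (γ (s₄ t)))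
    (r : ℝ) (hr : 0 < r) (hratio : ∀ t ∈ Set.Icc (0:ℝ) 1, Y t = r * X t)
    (hend0 : A₂ 0 + A₄ 0 = 0) (hend1 : A₂ 1 + A₄ 1 = 0) :
    X 1 = X 0 ∧ Y 1 = Y 0 := by
  subst hX hY hA₂ hA₄
  have hI : UniqueDiffOn ℝ (Icc (0:ℝ) 1) := uniqueDiffOn_Icc one_pos
  have hderiv (t : ℝ) (ht : t ∈ Icc (0:ℝ) 1) :
      HasDerivWithinAt (rectangleInvariant γ s₁ s₂ s₃ s₄ r) 0 (Icc 0 1) t := by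
    have hside : γ (s₃ t) - γ (s₂ t) = γ (s₄ t) - γ (s₁ t) := by
      rw [sub_eq_sub_iff_add_eq_add, add_comm, hpar t ht, add_comm]
    refine hasDerivWithinAt_rectangleInvariant hγ hper (hI t ht) ht
      ((hc₁.differentiableOn one_ne_zero t ht).hasDerivWithinAt)
      ((hc₂.differentiableOn one_ne_zero t ht).hasDerivWithinAt)
      ((hc₃.differentiableOn one_ne_zero t ht).hasDerivWithinAt)
      ((hc₄.differentiableOn one_ne_zero t ht).hasDerivWithinAt) hpar
      (pdet_eq_neg_mul_inner_of_inner_eq_zero (hperp t ht) (hccw t ht) ?_)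
    rw [← hside]
    exact hratio t ht
  have hconst := constant_of_derivWithin_zero (fun t ht => (hderiv t ht).differentiableWithinAt)
    (fun t ht => (hderiv t (Ico_subset_Icc_self ht)).derivWithin (hI t (Ico_subset_Icc_self ht)))
    1 (right_mem_Icc.2 zero_le_one)
  change arcArea γ (s₂ 0) (s₃ 0) + arcArea γ (s₄ 0) (s₁ 0 + 1) = 0 at hend0
  change arcArea γ (s₂ 1) (s₃ 1) + arcArea γ (s₄ 1) (s₁ 1 + 1) = 0 at hend1
  simp only [rectangleInvariant, hend0, hend1, zero_add] at hconst
  have hX : ‖γ (s₂ 1) - γ (s₁ 1)‖ = ‖γ (s₂ 0) - γ (s₁ 0)‖ :=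
    (sq_eq_sq₀ (norm_nonneg _) (norm_nonneg _)).1 (mul_left_cancel₀ (by positivity) hconst)
  refine ⟨hX, ?_⟩
  rw [hratio 1 (right_mem_Icc.2 zero_le_one), hratio 0 (left_mem_Icc.2 zero_le_one)]
  exact congrArg _ hX

/-- Non-squeezing: for a continuously differentiable path of rectangles
gracing `γ` with constant aspect ratio, if `A₂ + A₄` vanishes at both ends,
then the initial and final rectangles are congruent: `X 1 = X 0`, `Y 1 = Y 0`. -/
theorem stmt11
    (γ : ℝ → EuclideanSpace ℝ (Fin 2)) (hγ : ContDiff ℝ 1 γ)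
    (hper : ∀ s : ℝ, γ (s + 1) = γ s)
    (s₁ s₂ s₃ s₄ : ℝ → ℝ)
    (hc₁ : ContDiffOn ℝ 1 s₁ (Set.Icc (0:ℝ) 1)) (hc₂ : ContDiffOn ℝ 1 s₂ (Set.Icc (0:ℝ) 1))
    (hc₃ : ContDiffOn ℝ 1 s₃ (Set.Icc (0:ℝ) 1)) (hc₄ : ContDiffOn ℝ 1 s₄ (Set.Icc (0:ℝ) 1))
    (hpar : ∀ t ∈ Set.Icc (0:ℝ) 1, γ (s₁ t) + γ (s₃ t) = γ (s₂ t) + γ (s₄ t))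
    (hperp : ∀ t ∈ Set.Icc (0:ℝ) 1, inner ℝ (γ (s₂ t) - γ (s₁ t)) (γ (s₄ t) - γ (s₁ t)) = (0 : ℝ))
    (hccw : ∀ t ∈ Set.Icc (0:ℝ) 1, pdet (γ (s₂ t) - γ (s₁ t)) (γ (s₄ t) - γ (s₁ t)) > 0)
    (X Y : ℝ → ℝ)
    (hX : X = fun t => ‖γ (s₂ t) - γ (s₁ t)‖)
    (hY : Y = fun t => ‖γ (s₃ t) - γ (s₂ t)‖)
    (A₁ A₂ A₃ A₄ : ℝ → ℝ)
    (hA₁ : A₁ = fun t => (1/2) * (∫ s in (s₁ t)..(s₂ t), pdet (γ s) (deriv γ s))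
        + (1/2) * pdet (γ (s₂ t)) (γ (s₁ t)))
    (hA₂ : A₂ = fun t => (1/2) * (∫ s in (s₂ t)..(s₃ t), pdet (γ s) (deriv γ s))
        + (1/2) * pdet (γ (s₃ t)) (γ (s₂ t)))
    (hA₃ : A₃ = fun t => (1/2) * (∫ s in (s₃ t)..(s₄ t), pdet (γ s) (deriv γ s))
        + (1/2) * pdet (γ (s₄ t)) (γ (s₃ t)))
    (hA₄ : A₄ = fun t => (1/2) * (∫ s in (s₄ t)..(s₁ t + 1), pdet (γ s) (deriv γ s))
        + (1/2) * pdet (γ (s₁ t + 1)) (γ (s₄ t)))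
    (A : ℝ → ℝ) (hA : A = fun t => (A₁ t + A₃ t) - (A₂ t + A₄ t))
    (r : ℝ) (hr : 0 < r) (hratio : ∀ t ∈ Set.Icc (0:ℝ) 1, Y t = r * X t)
    (hend0 : A₂ 0 + A₄ 0 = 0) (hend1 : A₂ 1 + A₄ 1 = 0) :
    X 1 = X 0 ∧ Y 1 = Y 0 :=
  stmt11_general γ hγ hper s₁ s₂ s₃ s₄ hc₁ hc₂ hc₃ hc₄ hpar hperp hccw X Y hX hY A₂ A₄ hA₂ hA₄ r hr
    hratio hend0 hend1
end
end
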